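/- With ξ₀(r) = λ′(1−2^{−α})^{−1} 2^{−α⌊log₂ r⌋} and ξ₁(r) = (ρ/log₂ e)(⌊log₂ r⌋ + 2^{−α}/(1−2^{−α}) + 2) ξ₀(r), suppose |Z_{m,n}| ≤ a(m) + a(n) for all pairs with θ(m,n) > N_X, where a(n) = ρ(log(n+1))^b. Then for all k ≥ N_X and all n ≥ 1, sup_{t∈[0,1]} |X_n(t) − X_n(t;k)| ≤ ξ₁(k) + ξ₀(k) a(n), where X_n(t;k) = Σ_{m≤k} λ_m Z_{m,n} Λ_m(t). -/

import Mathlib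

/-- Position of the pair (m,n), m ≥ 0, n ≥ 1, in the total order that compares m+n first,
then lexicographically. -/
def pairIdx (m n : ℕ) : ℕ := (m + n) * (m + n - 1) / 2 + m + 1

/-- The coefficient λ_m: λ_0 = l0 and λ_m = λ′ 2^{−α⌊log₂ m⌋} for m ≥ 1. -/
noncomputable def lamCoef (l0 lam' α : ℝ) (m : ℕ) : ℝ :=
  if m = 0 then l0 else lam' * (2 : ℝ) ^ (-(α * (Nat.log 2 m : ℝ)))

/-- ξ₀(r) = λ′(1−2^{−α})⁻¹ 2^{−α⌊log₂ r⌋}. -/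
noncomputable def xi0 (lam' α : ℝ) (r : ℕ) : ℝ :=
  lam' * (1 - (2 : ℝ) ^ (-α))⁻¹ * (2 : ℝ) ^ (-(α * (Nat.log 2 r : ℝ)))

/-- ξ₁(r) = (ρ/log₂ e)(⌊log₂ r⌋ + 2^{−α}/(1−2^{−α}) + 2) ξ₀(r). -/
noncomputable def xi1 (lam' α ρ : ℝ) (r : ℕ) : ℝ :=
  (ρ / Real.logb 2 (Real.exp 1))
    * ((Nat.log 2 r : ℝ) + (2 : ℝ) ^ (-α) / (1 - (2 : ℝ) ^ (-α)) + 2) * xi0 lam' α r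

/-- rpow-to-monoid-pow conversion for the dyadic weights. -/
lemma rpow_neg_mul_nat (α : ℝ) (j : ℕ) :
    (2 : ℝ) ^ (-(α * (j : ℝ))) = ((2 : ℝ) ^ (-α)) ^ j := by
  rw [← Real.rpow_natCast ((2 : ℝ) ^ (-α)) j, ← Real.rpow_mul (by norm_num), neg_mul]

/-- The dominating function. -/
noncomputable def gfun (Λ : ℕ → ℝ → ℝ) (lam' α ρ an : ℝ) (t : ℝ) (m : ℕ) : ℝ :=
  lam' * ((2 : ℝ) ^ (-α)) ^ Nat.log 2 m
    * (ρ * Real.log 2 * ((Nat.log 2 m : ℝ) + 2) + an) * |Λ m t|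

lemma gfun_nonneg {Λ : ℕ → ℝ → ℝ} {lam' α ρ an : ℝ} {t : ℝ}
    (hlam' : 0 ≤ lam') (hρ : 0 ≤ ρ) (han : 0 ≤ an) (m : ℕ) :
    0 ≤ gfun Λ lam' α ρ an t m := by
  have hs : (0:ℝ) ≤ (2 : ℝ) ^ (-α) := (Real.rpow_pos_of_pos two_pos _).le
  have hl2 : (0:ℝ) ≤ Real.log 2 := Real.log_nonneg one_le_two
  have hcoef : 0 ≤ ρ * Real.log 2 * ((Nat.log 2 m : ℝ) + 2) + an := by positivity
  exact mul_nonneg (mul_nonneg (mul_nonneg hlam' (pow_nonneg hs _)) hcoef) (abs_nonneg _)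

lemma gfun_level {Λ : ℕ → ℝ → ℝ} {lam' α ρ an : ℝ} {t : ℝ}
    (hlevel : ∀ j : ℕ, ∀ t ∈ Set.Icc (0 : ℝ) 1,
      ∑ k ∈ Finset.range (2 ^ j), |Λ (2 ^ j + k) t| ≤ 1)
    (hlam' : 0 ≤ lam') (hρ : 0 ≤ ρ) (han : 0 ≤ an) (ht : t ∈ Set.Icc (0:ℝ) 1) (j : ℕ) :
    ∑ m ∈ Finset.Ico (2 ^ j) (2 ^ (j + 1)), gfun Λ lam' α ρ an t m
      ≤ lam' * ((2 : ℝ) ^ (-α)) ^ j * (ρ * Real.log 2 * ((j : ℝ) + 2) + an) := by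
  have hs : (0:ℝ) ≤ (2 : ℝ) ^ (-α) := (Real.rpow_pos_of_pos two_pos _).le
  have hl2 : (0:ℝ) ≤ Real.log 2 := Real.log_nonneg one_le_two
  set C : ℝ := lam' * ((2 : ℝ) ^ (-α)) ^ j * (ρ * Real.log 2 * ((j : ℝ) + 2) + an) with hC
  have hC0 : 0 ≤ C := by positivity
  have h1 : ∑ m ∈ Finset.Ico (2 ^ j) (2 ^ (j + 1)), gfun Λ lam' α ρ an t m
      = ∑ m ∈ Finset.Ico (2 ^ j) (2 ^ (j + 1)), C * |Λ m t| := by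
    refine Finset.sum_congr rfl (fun m hm => ?_)
    rcases Finset.mem_Ico.1 hm with ⟨h₁, h₂⟩
    have hlog : Nat.log 2 m = j := Nat.log_eq_of_pow_le_of_lt_pow h₁ h₂
    rw [gfun, hlog]
  rw [h1, ← Finset.mul_sum]
  have h2 : ∑ m ∈ Finset.Ico (2 ^ j) (2 ^ (j + 1)), |Λ m t| ≤ 1 := by
    rw [Finset.sum_Ico_eq_sum_range]
    have hsub : 2 ^ (j + 1) - 2 ^ j = 2 ^ j := by rw [pow_succ]; omega
    rw [hsub]
    exact hlevel j t ht
  calc C * ∑ m ∈ Finset.Ico (2 ^ j) (2 ^ (j + 1)), |Λ m t| ≤ C * 1 :=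
        mul_le_mul_of_nonneg_left h2 hC0
    _ = C := mul_one C

lemma gfun_group {Λ : ℕ → ℝ → ℝ} {lam' α ρ an : ℝ} {t : ℝ}
    (hlevel : ∀ j : ℕ, ∀ t ∈ Set.Icc (0 : ℝ) 1,
      ∑ k ∈ Finset.range (2 ^ j), |Λ (2 ^ j + k) t| ≤ 1)
    (hlam' : 0 ≤ lam') (hρ : 0 ≤ ρ) (han : 0 ≤ an) (ht : t ∈ Set.Icc (0:ℝ) 1) (J : ℕ) :
    ∀ L : ℕ, ∑ m ∈ Finset.Ico (2 ^ J) (2 ^ (J + L)), gfun Λ lam' α ρ an t m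
      ≤ ∑ j ∈ Finset.range L,
          lam' * ((2 : ℝ) ^ (-α)) ^ (J + j) * (ρ * Real.log 2 * (((J + j : ℕ) : ℝ) + 2) + an) := by
  intro L
  induction L with
  | zero => simp
  | succ L ih =>
    have hmono1 : (2:ℕ) ^ J ≤ 2 ^ (J + L) := Nat.pow_le_pow_right (by norm_num) (by omega)
    have hmono2 : (2:ℕ) ^ (J + L) ≤ 2 ^ (J + (L + 1)) := Nat.pow_le_pow_right (by norm_num) (by omega)
    have hsplit := Finset.sum_Ico_consecutive (fun m => gfun Λ lam' α ρ an t m) hmono1 hmono2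
    rw [← hsplit, Finset.sum_range_succ]
    have hlev := gfun_level (α := α) hlevel hlam' hρ han ht (J + L)
    have hre : J + L + 1 = J + (L + 1) := by omega
    rw [hre] at hlev
    exact add_le_add ih hlev

lemma c_series_bound {s : ℝ} (hs0 : 0 < s) (hs1 : s < 1) {lam' D an : ℝ}
    (hlam' : 0 ≤ lam') (hD : 0 ≤ D) (han : 0 ≤ an) (J : ℕ) (L : ℕ) :
    ∑ j ∈ Finset.range L, lam' * s ^ (J + j) * (D * (((J + j : ℕ) : ℝ) + 2) + an)
      ≤ lam' * s ^ J * (1 - s)⁻¹ * (D * ((J : ℝ) + s / (1 - s) + 2) + an) := by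
  have h1s : 0 < 1 - s := by linarith
  set F : ℕ → ℝ := fun j => lam' * s ^ J * ((D * ((J : ℝ) + 2) + an) * s ^ j + D * ((j : ℝ) * s ^ j))
    with hF
  have hFeq : ∀ j : ℕ, lam' * s ^ (J + j) * (D * (((J + j : ℕ) : ℝ) + 2) + an) = F j := by
    intro j
    rw [hF]
    simp only [pow_add]
    push_cast
    ring
  have hgeo : Summable (fun j : ℕ => s ^ j) := summable_geometric_of_lt_one hs0.le hs1
  have hjs : Summable (fun j : ℕ => (j : ℝ) * s ^ j) := by
    have := summable_pow_mul_geometric_of_norm_lt_one (R := ℝ) 1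
      (r := s) (by rw [Real.norm_eq_abs, abs_of_pos hs0]; exact hs1)
    simpa [pow_one] using this
  have hFsum : Summable F := by
    rw [hF]
    exact Summable.mul_left _ (Summable.add (hgeo.mul_left _) (hjs.mul_left _))
  have hF0 : ∀ j, 0 ≤ F j := by
    intro j
    have hs' : (0:ℝ) ≤ s ^ j := pow_nonneg hs0.le _
    have : 0 ≤ (D * ((J : ℝ) + 2) + an) := by positivity
    have hj' : (0:ℝ) ≤ (j : ℝ) * s ^ j := mul_nonneg (Nat.cast_nonneg _) hs'
    positivity
  have hle : ∑ j ∈ Finset.range L, F j ≤ ∑' j, F j := Summable.sum_le_tsum _ (fun j _ => hF0 j) hFsum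
  have htsum : ∑' j, F j = lam' * s ^ J *
      ((D * ((J : ℝ) + 2) + an) * (1 - s)⁻¹ + D * (s / (1 - s) ^ 2)) := by
    rw [hF, tsum_mul_left, Summable.tsum_add (hgeo.mul_left _) (hjs.mul_left _),
      tsum_mul_left, tsum_mul_left, tsum_geometric_of_lt_one hs0.le hs1,
      tsum_coe_mul_geometric_of_norm_lt_one (𝕜 := ℝ)
        (by rw [Real.norm_eq_abs, abs_of_pos hs0]; exact hs1)]
  have hfinal : lam' * s ^ J * ((D * ((J : ℝ) + 2) + an) * (1 - s)⁻¹ + D * (s / (1 - s) ^ 2))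
      = lam' * s ^ J * (1 - s)⁻¹ * (D * ((J : ℝ) + s / (1 - s) + 2) + an) := by
    field_simp
    ring
  calc ∑ j ∈ Finset.range L, lam' * s ^ (J + j) * (D * (((J + j : ℕ) : ℝ) + 2) + an)
      = ∑ j ∈ Finset.range L, F j := Finset.sum_congr rfl (fun j _ => hFeq j)
    _ ≤ ∑' j, F j := hle
    _ = _ := by rw [htsum, hfinal]

/-- Uniform truncation-error bound: if no record |Z_{m,n}| > a(m)+a(n) occurs beyond position
N_X, then for all k ≥ N_X and n ≥ 1, sup_t |X_n(t) − X_n(t;k)| ≤ ξ₁(k) + ξ₀(k) a(n). -/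
theorem stmt18 (Λ : ℕ → ℝ → ℝ) (Z : ℕ → ℕ → ℝ) (lam' α ρ b l0 : ℝ)
    (hlam' : 0 < lam') (hα0 : 0 < α) (hα1 : α < 1) (hρ : 0 < ρ)
    (hb0 : 0 < b) (hb1 : b < 1) (hl0 : 0 < l0)
    (hbdd : ∀ m t, |Λ m t| ≤ 1)
    (hlevel : ∀ j : ℕ, ∀ t ∈ Set.Icc (0 : ℝ) 1,
      ∑ k ∈ Finset.range (2 ^ j), |Λ (2 ^ j + k) t| ≤ 1)
    (NX : ℕ)
    (hrec : ∀ m n : ℕ, 1 ≤ n → NX < pairIdx m n →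
      |Z m n| ≤ ρ * Real.log ((m : ℝ) + 1) ^ b + ρ * Real.log ((n : ℝ) + 1) ^ b) :
    ∀ k : ℕ, NX ≤ k → ∀ n : ℕ, 1 ≤ n → ∀ t ∈ Set.Icc (0 : ℝ) 1,
      |(∑' m : ℕ, lamCoef l0 lam' α m * Z m n * Λ m t)
          - ∑ m ∈ Finset.range (k + 1), lamCoef l0 lam' α m * Z m n * Λ m t|
        ≤ xi1 lam' α ρ k + xi0 lam' α k * (ρ * Real.log ((n : ℝ) + 1) ^ b) := by
  intro k hk n hn t ht
  have hs0 : (0:ℝ) < (2 : ℝ) ^ (-α) := Real.rpow_pos_of_pos two_pos _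
  have hs1 : (2 : ℝ) ^ (-α) < 1 :=
    Real.rpow_lt_one_of_one_lt_of_neg one_lt_two (by linarith)
  set s : ℝ := (2 : ℝ) ^ (-α) with hs_def
  have h1s : 0 < 1 - s := by linarith
  have hl2 : (0:ℝ) < Real.log 2 := Real.log_pos one_lt_two
  set J : ℕ := Nat.log 2 k with hJ
  have hlogn : (0:ℝ) ≤ Real.log ((n : ℝ) + 1) :=
    Real.log_nonneg (by have : (0:ℝ) ≤ (n:ℝ) := Nat.cast_nonneg n; linarith)
  set an : ℝ := ρ * Real.log ((n : ℝ) + 1) ^ b with han_def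
  have han : 0 ≤ an := mul_nonneg hρ.le (Real.rpow_nonneg hlogn b)
  set f : ℕ → ℝ := fun m => lamCoef l0 lam' α m * Z m n * Λ m t with hf_def
  set E : ℝ := lam' * s ^ J * (1 - s)⁻¹ * (ρ * Real.log 2 * ((J : ℝ) + s / (1 - s) + 2) + an)
    with hE
  -- pointwise bound
  have hfg : ∀ m : ℕ, k + 1 ≤ m → |f m| ≤ gfun Λ lam' α ρ an t m := by
    intro m hm
    have hm1 : m ≠ 0 := by omega
    have hpair : NX < pairIdx m n := by
      have h1 : m + 1 ≤ pairIdx m n := by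
        rw [pairIdx, add_assoc]
        exact Nat.le_add_left _ _
      omega
    have hZ0 := hrec m n hn hpair
    set j : ℕ := Nat.log 2 m with hj
    have hlamm : lamCoef l0 lam' α m = lam' * s ^ j := by
      rw [lamCoef, if_neg hm1, hs_def, ← rpow_neg_mul_nat]
    have hmlt : (m : ℝ) + 1 ≤ 2 ^ (j + 1) := by
      have h := Nat.lt_pow_succ_log_self (one_lt_two) m
      have h' : m + 1 ≤ 2 ^ (j + 1) := h
      exact_mod_cast h'
    have hxle : Real.log ((m : ℝ) + 1) ≤ ((j : ℝ) + 1) * Real.log 2 := by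
      calc Real.log ((m : ℝ) + 1) ≤ Real.log ((2:ℝ) ^ (j + 1)) :=
            Real.log_le_log (by positivity) hmlt
        _ = ((j : ℝ) + 1) * Real.log 2 := by rw [Real.log_pow]; push_cast; ring
    have hlogm : (0:ℝ) ≤ Real.log ((m : ℝ) + 1) :=
      Real.log_nonneg (by have : (0:ℝ) ≤ (m:ℝ) := Nat.cast_nonneg m; linarith)
    have hpow : Real.log ((m : ℝ) + 1) ^ b ≤ Real.log 2 * ((j : ℝ) + 2) := by
      have hjc : (0:ℝ) ≤ (j : ℝ) := Nat.cast_nonneg j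
      rcases le_or_gt (Real.log ((m : ℝ) + 1)) 1 with hx1 | hx1
      · have h1 : Real.log ((m : ℝ) + 1) ^ b ≤ 1 := by
          calc Real.log ((m : ℝ) + 1) ^ b ≤ (1:ℝ) ^ b :=
                Real.rpow_le_rpow hlogm hx1 hb0.le
            _ = 1 := Real.one_rpow b
        have h2 : (1:ℝ) ≤ Real.log 2 * 2 := by
          have := Real.log_two_gt_d9
          nlinarith
        nlinarith
      · calc Real.log ((m : ℝ) + 1) ^ b ≤ Real.log ((m : ℝ) + 1) ^ (1:ℝ) :=
              Real.rpow_le_rpow_of_exponent_le hx1.le hb1.le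
          _ = Real.log ((m : ℝ) + 1) := Real.rpow_one _
          _ ≤ ((j : ℝ) + 1) * Real.log 2 := hxle
          _ ≤ Real.log 2 * ((j : ℝ) + 2) := by nlinarith
    have hZ : |Z m n| ≤ ρ * Real.log 2 * ((j : ℝ) + 2) + an := by
      have h2 : ρ * Real.log ((m : ℝ) + 1) ^ b ≤ ρ * (Real.log 2 * ((j : ℝ) + 2)) :=
        mul_le_mul_of_nonneg_left hpow hρ.le
      rw [han_def]
      calc |Z m n| ≤ ρ * Real.log ((m : ℝ) + 1) ^ b + ρ * Real.log ((n : ℝ) + 1) ^ b := hZ0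
        _ ≤ ρ * Real.log 2 * ((j : ℝ) + 2) + ρ * Real.log ((n : ℝ) + 1) ^ b := by
            rw [mul_assoc]; linarith
    have habs : |f m| = lam' * s ^ j * |Z m n| * |Λ m t| := by
      show |lamCoef l0 lam' α m * Z m n * Λ m t| = _
      rw [hlamm, abs_mul, abs_mul,
        abs_of_nonneg (mul_nonneg hlam'.le (pow_nonneg hs0.le _))]
    rw [habs, gfun, hs_def]
    rw [← hj]
    apply mul_le_mul_of_nonneg_right _ (abs_nonneg _)
    exact mul_le_mul_of_nonneg_left hZ (mul_nonneg hlam'.le (pow_nonneg hs0.le _))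
  -- core bound on blocks
  have hcore : ∀ M : ℕ, ∑ m ∈ Finset.Ico (k + 1) M, |f m| ≤ E := by
    intro M
    have hsub : Finset.Ico (k + 1) M ⊆ Finset.Ico (2 ^ J) (2 ^ (J + M)) := by
      apply Finset.Ico_subset_Ico
      · rcases Nat.eq_zero_or_pos k with rfl | hk0
        · simp [hJ]
        · exact le_trans (Nat.pow_log_le_self 2 hk0.ne') (Nat.le_succ k)
      · calc M ≤ 2 ^ M := (Nat.lt_two_pow_self (n := M)).le
          _ ≤ 2 ^ (J + M) := Nat.pow_le_pow_right (by norm_num) (by omega)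
    calc ∑ m ∈ Finset.Ico (k + 1) M, |f m|
        ≤ ∑ m ∈ Finset.Ico (k + 1) M, gfun Λ lam' α ρ an t m :=
          Finset.sum_le_sum (fun m hm => hfg m (Finset.mem_Ico.1 hm).1)
      _ ≤ ∑ m ∈ Finset.Ico (2 ^ J) (2 ^ (J + M)), gfun Λ lam' α ρ an t m :=
          Finset.sum_le_sum_of_subset_of_nonneg hsub
            (fun m _ _ => gfun_nonneg hlam'.le hρ.le han m)
      _ ≤ ∑ j ∈ Finset.range M,
            lam' * ((2 : ℝ) ^ (-α)) ^ (J + j) * (ρ * Real.log 2 * (((J + j : ℕ) : ℝ) + 2) + an) :=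
          gfun_group hlevel hlam'.le hρ.le han ht J M
      _ ≤ E := by
          rw [hE]
          exact c_series_bound hs0 hs1 hlam'.le (by positivity) han J M
  -- shifted sums
  have hshift : ∀ N : ℕ, ∑ i ∈ Finset.range N, |f (i + (k + 1))| ≤ E := by
    intro N
    have heq : ∑ m ∈ Finset.Ico (k + 1) (k + 1 + N), |f m|
        = ∑ i ∈ Finset.range N, |f (i + (k + 1))| := by
      rw [Finset.sum_Ico_eq_sum_range]
      simp only [Nat.add_sub_cancel_left]
      exact Finset.sum_congr rfl (fun i _ => by rw [add_comm])
    rw [← heq]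
    exact hcore _
  have hsumabs : Summable (fun i => |f (i + (k + 1))|) :=
    summable_of_sum_range_le (fun _ => abs_nonneg _) hshift
  have hsum_shift : Summable (fun i => f (i + (k + 1))) := hsumabs.of_abs
  have hsumf : Summable f := (summable_nat_add_iff (k + 1)).mp hsum_shift
  have hsplit : ∑ i ∈ Finset.range (k + 1), f i + ∑' i, f (i + (k + 1)) = ∑' i, f i :=
    Summable.sum_add_tsum_nat_add (k + 1) hsumf
  have hdiff : (∑' m : ℕ, f m) - ∑ m ∈ Finset.range (k + 1), f m = ∑' i, f (i + (k + 1)) := by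
    rw [← hsplit]; ring
  have htail : |∑' i, f (i + (k + 1))| ≤ E := by
    calc |∑' i, f (i + (k + 1))| ≤ ∑' i, |f (i + (k + 1))| := by
          have := norm_tsum_le_tsum_norm (f := fun i => f (i + (k + 1)))
            (by simpa [Real.norm_eq_abs] using hsumabs)
          simpa [Real.norm_eq_abs] using this
      _ ≤ E := Summable.tsum_le_of_sum_range_le hsumabs hshift
  have hEB : E = xi1 lam' α ρ k + xi0 lam' α k * an := by
    rw [hE, xi1, xi0, ← hJ, rpow_neg_mul_nat, ← hs_def]
    have hlogb : Real.logb 2 (Real.exp 1) = (Real.log 2)⁻¹ := by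
      rw [Real.logb, Real.log_exp, one_div]
    rw [hlogb]
    have hrw : ρ / (Real.log 2)⁻¹ = ρ * Real.log 2 := by
      field_simp
    rw [hrw]
    ring
  rw [hdiff]
  rw [← hEB]
  exact htail
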